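/- arXiv:1305.3137 — 2 statements merged into one kernel-verified Lean document; each statement's English description precedes it below -/
import Mathlib

section
/- An affine Cartan matrix of size n×n has rank exactly n−1. -/
/-- An `n × n` integer matrix is an (indecomposable) affine Cartan matrix if its diagonal
entries are 2, off-diagonal entries are nonpositive, `A i j = 0 ↔ A j i = 0`, there is a
componentwise strictly positive vector `v` with `A.mulVec v = 0`, and the index set admits
no partition into two nonempty mutually "orthogonal" blocks. -/
def IsIndecAffineCartan {n : ℕ} (A : Matrix (Fin n) (Fin n) ℤ) : Prop :=
  (∀ i, A i i = 2) ∧ (∀ i j, i ≠ j → A i j ≤ 0) ∧ (∀ i j, A i j = 0 ↔ A j i = 0) ∧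
  (∃ v : Fin n → ℚ, (∀ i, 0 < v i) ∧ (A.map (Int.cast : ℤ → ℚ)).mulVec v = 0) ∧
  (∀ s : Set (Fin n), s.Nonempty → sᶜ.Nonempty → ∃ i ∈ s, ∃ j ∈ sᶜ, A i j ≠ 0)

/-!
If `B w = 0`, let `c` be the largest ratio `w i / v i`; then `u = c • v - w` is a nonnegative
null vector vanishing somewhere. In row `i` of `B u = 0` all terms off the diagonal are `≤ 0`, so
where `u i = 0` every term vanishes and `u` vanishes at every neighbour of `i`. By
indecomposability the zero set of `u` is everything, so `w = c • v`: the kernel is the line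
through `v`, and rank–nullity gives the rank.
-/

namespace Matrix

def IsIndecomposable {ι R : Type*} [Zero R] (B : Matrix ι ι R) : Prop :=
  ∀ s : Set ι, s.Nonempty → sᶜ.Nonempty → ∃ i ∈ s, ∃ j ∈ sᶜ, B i j ≠ 0

variable {ι K : Type*} [Fintype ι] [Field K] [LinearOrder K] [IsStrictOrderedRing K]
  {B : Matrix ι ι K}

theorem apply_eq_zero_of_mulVec_eq_zero_of_nonneg (hoff : ∀ i j, i ≠ j → B i j ≤ 0)
    {u : ι → K} (hu : 0 ≤ u) (hBu : B *ᵥ u = 0) {i j : ι} (hi : u i = 0) (hij : B i j ≠ 0) :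
    u j = 0 := by
  have hrow : ∑ k, B i k * u k = 0 := congrFun hBu i
  have hterm : ∀ k ∈ Finset.univ, B i k * u k ≤ 0 := by
    intro k _
    rcases eq_or_ne i k with rfl | hik
    · simp [hi]
    · exact mul_nonpos_of_nonpos_of_nonneg (hoff i k hik) (hu k)
  have hj := (Finset.sum_eq_zero_iff_of_nonpos hterm).mp hrow j (Finset.mem_univ j)
  exact (mul_eq_zero.mp hj).resolve_left hij

theorem eq_zero_of_mulVec_eq_zero_of_nonneg (hoff : ∀ i j, i ≠ j → B i j ≤ 0)
    (hB : B.IsIndecomposable) {u : ι → K} (hu : 0 ≤ u) (hBu : B *ᵥ u = 0) {i₀ : ι}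
    (hi₀ : u i₀ = 0) : u = 0 := by
  funext i
  by_contra hi
  obtain ⟨a, ha, b, hb, hab⟩ := hB {k | u k = 0} ⟨i₀, hi₀⟩ ⟨i, hi⟩
  exact hb (apply_eq_zero_of_mulVec_eq_zero_of_nonneg hoff hu hBu ha hab)

theorem ker_mulVecLin_eq_span_singleton (hoff : ∀ i j, i ≠ j → B i j ≤ 0)
    (hB : B.IsIndecomposable) {v : ι → K} (hv : ∀ i, 0 < v i) (hBv : B *ᵥ v = 0) :
    LinearMap.ker B.mulVecLin = K ∙ v := by
  refine le_antisymm (fun w hw => ?_) ((Submodule.span_singleton_le_iff_mem _ _).mpr hBv)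
  rw [LinearMap.mem_ker, mulVecLin_apply] at hw
  cases isEmpty_or_nonempty ι
  · simp [Subsingleton.elim w 0]
  obtain ⟨i₀, hmax⟩ := Finite.exists_max fun i => w i / v i
  set c := w i₀ / v i₀
  have hu : 0 ≤ c • v - w := fun i => by
    have := (div_le_iff₀ (hv i)).mp (hmax i)
    simp only [Pi.zero_apply, Pi.sub_apply, Pi.smul_apply, smul_eq_mul]
    linarith
  have hBu : B *ᵥ (c • v - w) = 0 := by
    rw [mulVec_sub, mulVec_smul, hBv, hw, smul_zero, sub_zero]
  have hi₀ : (c • v - w) i₀ = 0 := by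
    simp [c, div_mul_cancel₀ _ (hv i₀).ne']
  rw [← sub_eq_zero.mp (eq_zero_of_mulVec_eq_zero_of_nonneg hoff hB hu hBu hi₀)]
  exact Submodule.smul_mem _ c (Submodule.mem_span_singleton_self v)

theorem rank_eq_card_sub_one (hoff : ∀ i j, i ≠ j → B i j ≤ 0) (hB : B.IsIndecomposable)
    {v : ι → K} (hv : ∀ i, 0 < v i) (hBv : B *ᵥ v = 0) :
    B.rank = Fintype.card ι - 1 := by
  cases isEmpty_or_nonempty ι
  · have := B.rank_le_card_width
    simp_all
  have hv₀ : v ≠ 0 := fun h => (hv (Classical.arbitrary ι)).ne' (congrFun h _)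
  have hsum := LinearMap.finrank_range_add_finrank_ker B.mulVecLin
  rw [ker_mulVecLin_eq_span_singleton hoff hB hv hBv, finrank_span_singleton hv₀,
    Module.finrank_fintype_fun_eq_card] at hsum
  rw [rank]
  omega

end Matrix

theorem affine_cartan_rank_general {n : ℕ} (A : Matrix (Fin n) (Fin n) ℤ)
    (hA : IsIndecAffineCartan A) :
    (A.map (Int.cast : ℤ → ℚ)).rank = n - 1 := by
  obtain ⟨-, hoff, -, ⟨v, hv, hAv⟩, hind⟩ := hA
  have hoff' : ∀ i j, i ≠ j → A.map (Int.cast : ℤ → ℚ) i j ≤ 0 := fun i j hij => by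
    simpa using hoff i j hij
  have hind' : (A.map (Int.cast : ℤ → ℚ)).IsIndecomposable := fun s hs hsc => by
    simpa using hind s hs hsc
  simpa using Matrix.rank_eq_card_sub_one hoff' hind' hv hAv

/-- An indecomposable affine Cartan matrix of size `n × n` has rank exactly `n - 1`. -/
theorem affine_cartan_rank {n : ℕ} (hn : 0 < n) (A : Matrix (Fin n) (Fin n) ℤ)
    (hA : IsIndecAffineCartan A) :
    (A.map (Int.cast : ℤ → ℚ)).rank = n - 1 :=
  affine_cartan_rank_general A hA
end

section
/- If A is an indecomposable affine Cartan matrix and v > 0 is a componentwise positive vector with Av = 0, then any vector w with Aw = 0 is a scalar multiple of v; i.e., the kernel of A is one-dimensional. -/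
/-!
Let `c` be the largest of the ratios `w i / v i`. Then `u = c • v - w` is a nonnegative kernel
vector of `A` vanishing somewhere. In row `j` of `A u = 0` every term `A j k * u k` with
`k ≠ j` is `≤ 0`, so if `u j = 0` all of them vanish: the zero set of `u` is closed under the
relation `A j k ≠ 0`, and by indecomposability it is everything. Hence `w = c • v`.
-/

theorem exists_le_smul_of_pos {ι R : Type*} [Finite ι] [Nonempty ι] [Field R] [LinearOrder R]
    [IsStrictOrderedRing R] {v : ι → R} (hv : ∀ i, 0 < v i) (w : ι → R) :
    ∃ c : R, ∃ i, w ≤ c • v ∧ w i = c * v i := by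
  obtain ⟨i, hi⟩ := Finite.exists_max fun k => w k / v k
  refine ⟨w i / v i, i, fun k => ?_, (div_mul_cancel₀ _ (hv i).ne').symm⟩
  have := hi k
  rw [div_le_iff₀ (hv k)] at this
  simpa [mul_comm] using this

namespace Matrix

variable {ι R : Type*} [Fintype ι]

section OrderedRing

variable [Ring R] [LinearOrder R] [IsStrictOrderedRing R] {M : Matrix ι ι R} {u : ι → R}

theorem apply_eq_zero_of_apply_eq_zero_of_ne_zero (hoff : ∀ i j, i ≠ j → M i j ≤ 0)
    (hu : 0 ≤ u) (hMu : M *ᵥ u = 0) {j k : ι} (hj : u j = 0) (hjk : M j k ≠ 0) : u k = 0 := by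
  have hterms : ∀ m ∈ Finset.univ, M j m * u m ≤ 0 := by
    intro m _
    rcases eq_or_ne j m with rfl | hjm
    · simp [hj]
    · exact mul_nonpos_of_nonpos_of_nonneg (hoff j m hjm) (hu m)
  have hrow : ∑ m, M j m * u m = 0 := congrFun hMu j
  have hk := (Finset.sum_eq_zero_iff_of_nonpos hterms).mp hrow k (Finset.mem_univ k)
  exact (mul_eq_zero.mp hk).resolve_left hjk

theorem eq_zero_of_nonneg_of_mulVec_eq_zero (hoff : ∀ i j, i ≠ j → M i j ≤ 0)
    (hind : ∀ s : Set ι, s.Nonempty → sᶜ.Nonempty → ∃ i ∈ s, ∃ j ∈ sᶜ, M i j ≠ 0)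
    (hu : 0 ≤ u) (hMu : M *ᵥ u = 0) {i : ι} (hi : u i = 0) : u = 0 := by
  by_contra hne
  obtain ⟨k, hk⟩ := Function.ne_iff.mp hne
  obtain ⟨j, hj, l, hl, hjl⟩ := hind {m | u m = 0} ⟨i, hi⟩ ⟨k, hk⟩
  exact hl (apply_eq_zero_of_apply_eq_zero_of_ne_zero hoff hu hMu hj hjl)

end OrderedRing

variable [Field R] [LinearOrder R] [IsStrictOrderedRing R]

theorem exists_eq_smul_of_mulVec_eq_zero {M : Matrix ι ι R} (hoff : ∀ i j, i ≠ j → M i j ≤ 0)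
    (hind : ∀ s : Set ι, s.Nonempty → sᶜ.Nonempty → ∃ i ∈ s, ∃ j ∈ sᶜ, M i j ≠ 0)
    {v w : ι → R} (hv : ∀ i, 0 < v i) (hMv : M *ᵥ v = 0) (hMw : M *ᵥ w = 0) :
    ∃ c : R, w = c • v := by
  cases isEmpty_or_nonempty ι
  · exact ⟨0, Subsingleton.elim _ _⟩
  obtain ⟨c, i, hle, hi⟩ := exists_le_smul_of_pos hv w
  have hMu : M *ᵥ (c • v - w) = 0 := by simp [mulVec_sub, mulVec_smul, hMv, hMw]
  have hu := eq_zero_of_nonneg_of_mulVec_eq_zero hoff hind (sub_nonneg.mpr hle) hMu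
    (i := i) (by simp [hi])
  exact ⟨c, (sub_eq_zero.mp hu).symm⟩

end Matrix

/-- If `A` is an indecomposable affine Cartan matrix and `v > 0` satisfies `A v = 0`, then
every vector in the kernel of `A` is a scalar multiple of `v`: the kernel is
one-dimensional. -/
theorem affine_cartan_kernel_one_dimensional {n : ℕ} (A : Matrix (Fin n) (Fin n) ℤ)
    (hA : IsIndecAffineCartan A) (v : Fin n → ℚ) (hv : ∀ i, 0 < v i)
    (hAv : (A.map (Int.cast : ℤ → ℚ)).mulVec v = 0)
    (w : Fin n → ℚ) (hw : (A.map (Int.cast : ℤ → ℚ)).mulVec w = 0) :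
    ∃ c : ℚ, w = c • v := by
  obtain ⟨-, hoff, -, -, hind⟩ := hA
  refine Matrix.exists_eq_smul_of_mulVec_eq_zero (fun i j hij => ?_) (fun s hs hsc => ?_) hv hAv hw
  · exact Int.cast_nonpos.mpr (hoff i j hij)
  · obtain ⟨i, hi, j, hj, hij⟩ := hind s hs hsc
    exact ⟨i, hi, j, hj, Int.cast_ne_zero.mpr hij⟩
end
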